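/- arXiv:0910.0177 — 2 statements merged into one kernel-verified Lean document; each statement's English description precedes it below -/
import Mathlib

section
/- The identity z·erf(z) = (1/√π)·(e^{−z²} ∗ |z|) − (1/√π)·e^{−z²} holds for all real z, where ∗ denotes convolution on ℝ. -/
/-- The Gaussian error function on ℝ. -/
noncomputable def erf (x : ℝ) : ℝ :=
  (2 / Real.sqrt Real.pi) * ∫ t in (0:ℝ)..x, Real.exp (-t^2)

/-!
Split the integral at `0`: on each half-line `|t| e^{-(t-z)²} = ±t e^{-(t-z)²}`, and
`t e^{-(t-z)²}` has the explicit primitive `(√π/2) z erf(t - z) - e^{-(t-z)²}/2`, which tends to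
`±(√π/2) z` at `±∞`. Evaluating it at `0` with `erf` odd gives
`∫ e^{-(z-t)²} |t| dt = √π z erf z + e^{-z²}`.
-/

open MeasureTheory Real Filter Set Topology

theorem integral_abs_smul_of_hasDerivAt {E : Type*} [NormedAddCommGroup E] [NormedSpace ℝ E]
    [CompleteSpace E] {f F : ℝ → E} {a b : E}
    (hF : ∀ t, HasDerivAt F (t • f t) t) (hint : Integrable fun t => t • f t)
    (hbot : Tendsto F atBot (𝓝 b)) (htop : Tendsto F atTop (𝓝 a)) :
    ∫ t, |t| • f t = a + b - (2 : ℝ) • F 0 := by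
  have hIic : EqOn (fun t => |t| • f t) (fun t => -(t • f t)) (Iic 0) := fun t ht => by
    simp [abs_of_nonpos (show t ≤ 0 from ht), neg_smul]
  have hIoi : EqOn (fun t => |t| • f t) (fun t => t • f t) (Ioi 0) := fun t ht => by
    simp [abs_of_pos (show 0 < t from ht)]
  have hint_abs : Integrable fun t => |t| • f t := by
    rw [← integrableOn_univ, ← Iic_union_Ioi (a := (0 : ℝ))]
    exact (hint.neg.integrableOn.congr_fun hIic.symm measurableSet_Iic).union
      (hint.integrableOn.congr_fun hIoi.symm measurableSet_Ioi)
  rw [← intervalIntegral.integral_Iic_add_Ioi hint_abs.integrableOn hint_abs.integrableOn,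
    setIntegral_congr_fun measurableSet_Iic hIic, setIntegral_congr_fun measurableSet_Ioi hIoi,
    integral_neg, integral_Iic_of_hasDerivAt_of_tendsto' (fun t _ => hF t) hint.integrableOn hbot,
    integral_Ioi_of_hasDerivAt_of_tendsto' (fun t _ => hF t) hint.integrableOn htop, two_smul]
  abel

lemma tendsto_exp_neg_sq_cocompact :
    Tendsto (fun u : ℝ => exp (-u ^ 2)) (cocompact ℝ) (𝓝 0) := by
  refine tendsto_exp_atBot.comp (tendsto_neg_atTop_atBot.comp ?_)
  simpa [Function.comp_def, norm_eq_abs] using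
    (tendsto_pow_atTop two_ne_zero).comp (tendsto_norm_cocompact_atTop (E := ℝ))

lemma hasDerivAt_exp_neg_sq (u : ℝ) :
    HasDerivAt (fun u : ℝ => exp (-u ^ 2)) (-2 * u * exp (-u ^ 2)) u := by
  simpa [mul_comm, mul_left_comm, mul_assoc] using ((hasDerivAt_pow 2 u).neg).exp

lemma integrable_mul_exp_neg_sq_sub (z : ℝ) :
    Integrable fun t : ℝ => t * exp (-(t - z) ^ 2) := by
  have h₁ : Integrable fun u : ℝ => u * exp (-u ^ 2) := by
    simpa using integrable_mul_exp_neg_mul_sq one_pos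
  have h₀ : Integrable fun u : ℝ => exp (-u ^ 2) := by
    simpa using integrable_exp_neg_mul_sq one_pos
  refine ((h₁.comp_sub_right z).add ((h₀.comp_sub_right z).const_mul z)).congr
    (Eventually.of_forall fun t => ?_)
  simp only [Pi.add_apply]
  ring

lemma hasDerivAt_erf (x : ℝ) : HasDerivAt erf (2 / √π * exp (-x ^ 2)) x := by
  have hc : Continuous fun t : ℝ => exp (-t ^ 2) := by fun_prop
  exact ((hc.integral_hasStrictDerivAt 0 x).hasDerivAt).const_mul _

lemma erf_neg (x : ℝ) : erf (-x) = -erf x := by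
  have h := intervalIntegral.integral_comp_neg (a := (0 : ℝ)) (b := x) fun t => exp (-t ^ 2)
  simp only [neg_sq, neg_zero] at h
  rw [erf, erf, intervalIntegral.integral_symm (-x) 0, ← h, mul_neg]

lemma tendsto_erf_atTop : Tendsto erf atTop (𝓝 1) := by
  have h := intervalIntegral_tendsto_integral_Ioi 0
    (by simpa using (integrable_exp_neg_mul_sq one_pos).integrableOn :
      IntegrableOn (fun t : ℝ => exp (-t ^ 2)) (Ioi 0)) tendsto_id
  rw [show ∫ t in Ioi (0 : ℝ), exp (-t ^ 2) = √π / 2 by simpa using integral_gaussian_Ioi 1] at h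
  have h₂ := h.const_mul (2 / √π)
  rwa [show 2 / √π * (√π / 2) = 1 by field_simp] at h₂

lemma tendsto_erf_atBot : Tendsto erf atBot (𝓝 (-1)) :=
  ((tendsto_erf_atTop.comp tendsto_neg_atBot_atTop).neg).congr fun x => by
    simp [erf_neg]

theorem integral_abs_mul_exp_neg_sq_sub (z : ℝ) :
    ∫ t, |t| * exp (-(t - z) ^ 2) = √π * z * erf z + exp (-z ^ 2) := by
  set G : ℝ → ℝ := fun u => √π / 2 * z * erf u - exp (-u ^ 2) / 2
  have hG : ∀ t, HasDerivAt (fun t => G (t - z)) (t * exp (-(t - z) ^ 2)) t := fun t => by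
    refine ((((hasDerivAt_erf _).comp_sub_const t z).const_mul (√π / 2 * z)).fun_sub
      (((hasDerivAt_exp_neg_sq _).comp_sub_const t z).div_const 2)).congr_deriv ?_
    field_simp [(sqrt_pos.mpr pi_pos).ne']
    ring
  have hGbot : Tendsto G atBot (𝓝 (-(√π / 2 * z))) := by
    simpa using (tendsto_erf_atBot.const_mul (√π / 2 * z)).sub
      ((tendsto_exp_neg_sq_cocompact.mono_left atBot_le_cocompact).div_const 2)
  have hGtop : Tendsto G atTop (𝓝 (√π / 2 * z)) := by
    simpa using (tendsto_erf_atTop.const_mul (√π / 2 * z)).sub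
      ((tendsto_exp_neg_sq_cocompact.mono_left atTop_le_cocompact).div_const 2)
  have key := integral_abs_smul_of_hasDerivAt hG (integrable_mul_exp_neg_sq_sub z)
    (hGbot.comp (tendsto_atBot_add_const_right _ (-z) tendsto_id))
    (hGtop.comp (tendsto_atTop_add_const_right _ (-z) tendsto_id))
  simp only [smul_eq_mul] at key
  rw [key]
  simp only [G, zero_sub, erf_neg, neg_sq]
  ring

/-- z·erf(z) = (1/√π)·(e^{−z²} ∗ |z|)(z) − (1/√π)·e^{−z²} for all real z,
where (f ∗ g)(x) = ∫_ℝ f(x−t)g(t) dt. -/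
theorem stmt3 (z : ℝ) :
    z * erf z =
      (1 / Real.sqrt Real.pi) * (∫ t : ℝ, Real.exp (-(z - t)^2) * |t|)
        - (1 / Real.sqrt Real.pi) * Real.exp (-z^2) := by
  have hconv : (fun t => exp (-(z - t) ^ 2) * |t|) = fun t => |t| * exp (-(t - z) ^ 2) := by
    ext t
    rw [← neg_sub t z, neg_sq, mul_comm]
  rw [hconv, integral_abs_mul_exp_neg_sq_sub]
  field_simp [(sqrt_pos.mpr pi_pos).ne']
  ring
end

section
/- Let f : ℂ → ℂ be holomorphic on the horizontal strip {z : |Im z| < a} for some a > 0 and suppose that for every b < a there is C with |f(x+iy)| ≤ C·e^{−c|x|} for all |y| ≤ b (some fixed c > 0). Then the Fourier transform f̂ restricted to ℝ satisfies: for every k ∈ ℕ and every n < a there exist constants C_n, R > 0 with |f̂^{(k)}(x)| ≤ C_n · k! · R^k · e^{−n|x|} for all x ∈ ℝ. -/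
open Complex MeasureTheory Set Filter Metric Topology Interval

/-! The Fourier transform is the restriction to `ℝ` of `F ζ = ∫ f t * exp (-I t ζ) dt`, which is
holomorphic on the strip `|Im ζ| < c`. Shifting the line of integration to `Im z = β` with
`|β| = b < a` multiplies the integrand by `exp (β Re ζ)`; choosing the sign of `β` opposite to
that of `Re ζ` gives `‖F ζ‖ ≲ exp (-b |Re ζ|)` for `|Im ζ| ≤ c / 2`. Cauchy's estimate on the circle
of radius `c / 2` around a real `x` then bounds `F⁽ᵏ⁾ x` by a constant times
`k! (2 / c)ᵏ exp (-n |x|)` as soon as `n ≤ b`. -/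

lemma integrable_exp_neg_mul_abs {ε : ℝ} (hε : 0 < ε) :
    Integrable fun t : ℝ => Real.exp (-ε * |t|) := by
  have hIoi : IntegrableOn (fun t : ℝ => Real.exp (-ε * |t|)) (Ioi 0) :=
    (exp_neg_integrableOn_Ioi 0 hε).congr_fun (fun t ht => by rw [abs_of_pos ht]) measurableSet_Ioi
  have hIic : IntegrableOn (fun t : ℝ => Real.exp (-ε * |t|)) (Iic 0) := by
    have hneg : MeasurableEmbedding fun t : ℝ => -t := (Homeomorph.neg ℝ).measurableEmbedding
    rw [← Measure.map_neg_eq_self (volume : Measure ℝ), hneg.integrableOn_map_iff]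
    simpa [Function.comp_def] using (integrableOn_Ici_iff_integrableOn_Ioi).mpr hIoi
  simpa using hIic.union hIoi

lemma abs_mul_exp_neg_mul_abs_le {ε δ : ℝ} (hδ : 0 < δ) (t : ℝ) :
    |t| * Real.exp (-ε * |t|) ≤ δ⁻¹ * Real.exp (-(ε - δ) * |t|) := by
  have h : δ * |t| ≤ Real.exp (δ * |t|) := by linarith [Real.add_one_le_exp (δ * |t|)]
  calc |t| * Real.exp (-ε * |t|) = δ⁻¹ * (δ * |t|) * Real.exp (-ε * |t|) := by field_simp
    _ ≤ δ⁻¹ * Real.exp (δ * |t|) * Real.exp (-ε * |t|) := by gcongr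
    _ = δ⁻¹ * Real.exp (-(ε - δ) * |t|) := by rw [mul_assoc, ← Real.exp_add]; ring_nf

lemma abs_le_abs_of_mem_uIcc_zero {x y : ℝ} (h : x ∈ [[0, y]]) : |x| ≤ |y| := by
  simpa using abs_sub_left_of_mem_uIcc h

theorem integral_eq_integral_add_mul_I_of_differentiableOn {E : Type*} [NormedAddCommGroup E]
    [NormedSpace ℂ E] [CompleteSpace E] {g : ℂ → E} {β M ε : ℝ} (hε : 0 < ε)
    (hg : DifferentiableOn ℂ g (im ⁻¹' [[0, β]]))
    (hbound : ∀ x : ℝ, ∀ y ∈ [[0, β]], ‖g (x + y * I)‖ ≤ M * Real.exp (-ε * |x|)) :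
    ∫ x : ℝ, g x = ∫ x : ℝ, g (x + β * I) := by
  have hline : ∀ y ∈ [[0, β]], Integrable fun x : ℝ => g (x + y * I) := fun y hy =>
    ((integrable_exp_neg_mul_abs hε).const_mul M).mono'
      (hg.continuousOn.comp_continuous (by fun_prop) fun x => by
        simpa using hy).aestronglyMeasurable
      (ae_of_all _ fun x => hbound x y hy)
  set side : ℝ → E := fun s => ∫ y in (0 : ℝ)..β, g (s + y * I)
  have hside : Tendsto side (cocompact ℝ) (𝓝 0) := by
    have hexp : Tendsto (fun s : ℝ => Real.exp (-ε * |s|)) (cocompact ℝ) (𝓝 0) := by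
      refine (Real.tendsto_exp_neg_atTop_nhds_zero.comp
        (tendsto_norm_cocompact_atTop.const_mul_atTop hε)).congr fun s => ?_
      simp [neg_mul]
    refine squeeze_zero_norm (fun s => ?_) (by simpa using (hexp.const_mul M).mul_const |β|)
    simpa using intervalIntegral.norm_integral_le_of_norm_le_const
      fun y hy => hbound s y (uIoc_subset_uIcc hy)
  have hrect : ∀ T : ℝ, ((∫ x in (-T)..T, g x) - ∫ x in (-T)..T, g (x + β * I)) =
      I • side (-T) - I • side T := by
    intro T
    have h := integral_boundary_rect_eq_zero_of_differentiableOn g (-T : ℝ) (T + β * I)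
      (hg.mono fun z hz => by simpa using (mem_reProdIm.1 hz).2)
    simp only [ofReal_neg, neg_im, ofReal_im, neg_zero, ofReal_zero, zero_mul, add_zero, neg_re,
      ofReal_re, add_re, mul_re, I_re, mul_zero, I_im, mul_one, sub_self, add_im, mul_im,
      zero_add] at h
    simp only [side, ofReal_neg]
    rw [← sub_eq_zero, ← h]
    abel
  have hlim := (intervalIntegral_tendsto_integral (by simpa using hline 0 left_mem_uIcc)
    tendsto_neg_atTop_atBot tendsto_id).sub (intervalIntegral_tendsto_integral
    (hline β right_mem_uIcc) tendsto_neg_atTop_atBot tendsto_id)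
  have hlim0 : Tendsto (fun T => I • side (-T) - I • side T) atTop (𝓝 0) := by
    simpa using
      ((hside.comp (tendsto_neg_atTop_atBot.mono_right atBot_le_cocompact)).const_smul I).sub
      ((hside.comp (tendsto_id.mono_right atTop_le_cocompact)).const_smul I)
  exact sub_eq_zero.1 (tendsto_nhds_unique hlim (hlim0.congr fun T => (hrect T).symm))

noncomputable def fourierLaplace (φ : ℝ → ℂ) (ζ : ℂ) : ℂ := ∫ t : ℝ, φ t * cexp (-I * t * ζ)

lemma nonneg_of_norm_le_mul_exp {E : Type*} [SeminormedAddCommGroup E] {u : E} {C r : ℝ}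
    (h : ‖u‖ ≤ C * Real.exp r) : 0 ≤ C :=
  nonneg_of_mul_nonneg_left ((norm_nonneg u).trans h) (Real.exp_pos r)

lemma norm_cexp_neg_I_mul_mul (z ζ : ℂ) :
    ‖cexp (-I * z * ζ)‖ = Real.exp (z.im * ζ.re + z.re * ζ.im) := by
  rw [norm_exp]; congr 1; simp; ring

lemma norm_mul_cexp_neg_I_mul_mul_le {u z ζ : ℂ} {C c ε : ℝ}
    (hu : ‖u‖ ≤ C * Real.exp (-c * |z.re|)) (hζ : |ζ.im| ≤ c - ε) :
    ‖u * cexp (-I * z * ζ)‖ ≤ C * Real.exp (z.im * ζ.re) * Real.exp (-ε * |z.re|) := by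
  have hC : 0 ≤ C := nonneg_of_norm_le_mul_exp hu
  have hre : z.re * ζ.im ≤ (c - ε) * |z.re| :=
    calc z.re * ζ.im ≤ |z.re| * |ζ.im| := by rw [← abs_mul]; exact le_abs_self _
      _ ≤ (c - ε) * |z.re| := by rw [mul_comm]; gcongr
  rw [norm_mul, norm_cexp_neg_I_mul_mul]
  calc ‖u‖ * Real.exp (z.im * ζ.re + z.re * ζ.im)
      ≤ C * Real.exp (-c * |z.re|) * Real.exp (z.im * ζ.re + (c - ε) * |z.re|) := by gcongr
    _ = C * Real.exp (z.im * ζ.re) * Real.exp (-ε * |z.re|) := by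
      simp only [mul_assoc, ← Real.exp_add]; ring_nf

theorem differentiableOn_fourierLaplace {φ : ℝ → ℂ} {C c : ℝ} (hφ : AEStronglyMeasurable φ)
    (hbound : ∀ t, ‖φ t‖ ≤ C * Real.exp (-c * |t|)) :
    DifferentiableOn ℂ (fourierLaplace φ) {ζ | |ζ.im| < c} := by
  intro ζ₀ (hζ₀ : |ζ₀.im| < c)
  obtain ⟨δ, hδ, hδc⟩ : ∃ δ > 0, |ζ₀.im| + 3 * δ = c := ⟨(c - |ζ₀.im|) / 3, by linarith, by ring⟩
  have hball : ∀ ζ ∈ ball ζ₀ δ, |ζ.im| ≤ c - 2 * δ := fun ζ hζ => by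
    have := (abs_im_le_norm (ζ - ζ₀)).trans (mem_ball_iff_norm.1 hζ).le
    rw [sub_im] at this
    linarith [abs_sub_abs_le_abs_sub ζ.im ζ₀.im]
  have hmeas : ∀ ζ : ℂ, AEStronglyMeasurable fun t : ℝ => φ t * cexp (-I * t * ζ) := fun ζ =>
    hφ.mul (by fun_prop : Continuous fun t : ℝ => cexp (-I * t * ζ)).aestronglyMeasurable
  have hterm : ∀ ζ ∈ ball ζ₀ δ, ∀ t : ℝ,
      ‖φ t * cexp (-I * t * ζ)‖ ≤ C * Real.exp (-(2 * δ) * |t|) := fun ζ hζ t => by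
    simpa using norm_mul_cexp_neg_I_mul_mul_le (z := t) (by simpa using hbound t) (hball ζ hζ)
  refine (hasDerivAt_integral_of_dominated_loc_of_deriv_le (ball_mem_nhds ζ₀ hδ)
    (F' := fun ζ t => φ t * cexp (-I * t * ζ) * (-I * t))
    (bound := fun t => C * (δ⁻¹ * Real.exp (-δ * |t|))) (Eventually.of_forall hmeas)
    (((integrable_exp_neg_mul_abs (by positivity)).const_mul C).mono' (hmeas ζ₀)
      (ae_of_all _ (hterm ζ₀ (mem_ball_self hδ))))
    ((hmeas ζ₀).mul (by fun_prop : Continuous fun t : ℝ => -I * t).aestronglyMeasurable)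
    (ae_of_all _ fun t ζ hζ => ?_) (((integrable_exp_neg_mul_abs hδ).const_mul δ⁻¹).const_mul C)
    (ae_of_all _ fun t ζ _ => ?_)).2.differentiableAt.differentiableWithinAt
  · have hC : 0 ≤ C := nonneg_of_norm_le_mul_exp (hbound 0)
    calc ‖φ t * cexp (-I * t * ζ) * (-I * t)‖ = ‖φ t * cexp (-I * t * ζ)‖ * |t| := by simp
      _ ≤ C * Real.exp (-(2 * δ) * |t|) * |t| := by gcongr; exact hterm ζ hζ t
      _ = C * (|t| * Real.exp (-(2 * δ) * |t|)) := by ring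
      _ ≤ C * (δ⁻¹ * Real.exp (-(2 * δ - δ) * |t|)) :=
        mul_le_mul_of_nonneg_left (abs_mul_exp_neg_mul_abs_le hδ t) hC
      _ = C * (δ⁻¹ * Real.exp (-δ * |t|)) := by ring_nf
  · simpa [mul_assoc] using
      (((hasDerivAt_id ζ).const_mul (-I * t)).cexp.const_mul (φ t))

theorem norm_fourierLaplace_le {f : ℂ → ℂ} {a b c ε C : ℝ}
    (hf : DifferentiableOn ℂ f {z | |z.im| < a}) (hb₀ : 0 ≤ b) (hba : b < a)
    (hC : ∀ x y : ℝ, |y| ≤ b → ‖f (x + y * I)‖ ≤ C * Real.exp (-c * |x|))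
    (hε : 0 < ε) {ζ : ℂ} (hζ : |ζ.im| ≤ c - ε) :
    ‖fourierLaplace (fun t : ℝ => f t) ζ‖ ≤
      C * Real.exp (-b * |ζ.re|) * ∫ t : ℝ, Real.exp (-ε * |t|) := by
  set g : ℂ → ℂ := fun z => f z * cexp (-I * z * ζ)
  have hterm : ∀ x y : ℝ, |y| ≤ b →
      ‖g (x + y * I)‖ ≤ C * Real.exp (y * ζ.re) * Real.exp (-ε * |x|) := fun x y hy => by
    simpa [g] using norm_mul_cexp_neg_I_mul_mul_le (z := x + y * I) (by simpa using hC x y hy) hζ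
  -- shift the contour towards the side on which `exp (β * ζ.re)` is small
  obtain ⟨β, hβ, hβre⟩ : ∃ β : ℝ, |β| ≤ b ∧ β * ζ.re = -b * |ζ.re| := by
    rcases le_total 0 ζ.re with h | h
    · exact ⟨-b, by simp [abs_of_nonneg hb₀], by rw [abs_of_nonneg h]⟩
    · exact ⟨b, by simp [abs_of_nonneg hb₀], by rw [abs_of_nonpos h]; ring⟩
  have hg : DifferentiableOn ℂ g (im ⁻¹' [[0, β]]) :=
    (hf.mul (by fun_prop : Differentiable ℂ fun z => cexp (-I * z * ζ)).differentiableOn).mono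
      fun z hz => by
        show |z.im| < a
        linarith [abs_le_abs_of_mem_uIcc_zero hz]
  have hshift : fourierLaplace (fun t : ℝ => f t) ζ = ∫ x : ℝ, g (x + β * I) :=
    integral_eq_integral_add_mul_I_of_differentiableOn hε
      (M := C * Real.exp (b * |ζ.re|)) hg fun x y hy => by
        have hy' : |y| ≤ b := (abs_le_abs_of_mem_uIcc_zero hy).trans hβ
        have hC₀ : 0 ≤ C := nonneg_of_norm_le_mul_exp (hC 0 0 (by simpa using hb₀))
        have hyre : y * ζ.re ≤ b * |ζ.re| :=
          calc y * ζ.re ≤ |y| * |ζ.re| := by rw [← abs_mul]; exact le_abs_self _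
            _ ≤ b * |ζ.re| := by gcongr
        refine (hterm x y hy').trans ?_
        gcongr
  rw [hshift, ← hβre, ← integral_const_mul]
  exact norm_integral_le_of_norm_le ((integrable_exp_neg_mul_abs hε).const_mul _)
    (ae_of_all _ fun x => hterm x β hβ)

theorem iteratedDeriv_comp_ofReal {F : ℂ → ℂ} {U : Set ℂ} (hU : IsOpen U)
    (hF : DifferentiableOn ℂ F U) (hℝ : ∀ x : ℝ, (x : ℂ) ∈ U) (k : ℕ) :
    iteratedDeriv k (fun x : ℝ => F x) = fun x : ℝ => iteratedDeriv k F x := by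
  induction k with
  | zero => rfl
  | succ k ih =>
    ext x
    rw [iteratedDeriv_succ, iteratedDeriv_succ, ih, iteratedDeriv_eq_iterate]
    exact (((hF.analyticOnNhd hU).iterated_deriv k _
      (hℝ x)).differentiableAt.hasDerivAt.comp_ofReal).deriv

lemma abs_im_le_of_mem_closedBall_ofReal {x r : ℝ} {ζ : ℂ} (h : ζ ∈ closedBall (x : ℂ) r) :
    |ζ.im| ≤ r := by
  simpa using (abs_im_le_norm (ζ - x)).trans (mem_closedBall_iff_norm.1 h)

lemma abs_sub_le_abs_re_of_mem_closedBall_ofReal {x r : ℝ} {ζ : ℂ}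
    (h : ζ ∈ closedBall (x : ℂ) r) : |x| - r ≤ |ζ.re| := by
  have := (abs_re_le_norm (ζ - x)).trans (mem_closedBall_iff_norm.1 h)
  rw [sub_re, ofReal_re] at this
  linarith [abs_sub_abs_le_abs_sub x ζ.re, abs_sub_comm x ζ.re]

theorem norm_fourierLaplace_le_of_mem_closedBall {f : ℂ → ℂ} {a b c n r C : ℝ}
    (hf : DifferentiableOn ℂ f {z | |z.im| < a}) (hb₀ : 0 ≤ b) (hba : b < a) (hnb : n ≤ b)
    (hC : ∀ x y : ℝ, |y| ≤ b → ‖f (x + y * I)‖ ≤ C * Real.exp (-c * |x|))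
    (hrc : r < c) {x : ℝ} {ζ : ℂ} (hζ : ζ ∈ closedBall (x : ℂ) r) :
    ‖fourierLaplace (fun t : ℝ => f t) ζ‖ ≤
      C * Real.exp (b * r) * (∫ t : ℝ, Real.exp (-(c - r) * |t|)) * Real.exp (-n * |x|) := by
  have hexp : Real.exp (-b * |ζ.re|) ≤ Real.exp (b * r) * Real.exp (-n * |x|) := by
    rw [← Real.exp_add, Real.exp_le_exp]
    nlinarith [mul_le_mul_of_nonneg_left (abs_sub_le_abs_re_of_mem_closedBall_ofReal hζ) hb₀,
      mul_le_mul_of_nonneg_right hnb (abs_nonneg x)]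
  have hC₀ : 0 ≤ C := nonneg_of_norm_le_mul_exp (hC 0 0 (by simpa using hb₀))
  have hJ : 0 ≤ ∫ t : ℝ, Real.exp (-(c - r) * |t|) := integral_nonneg fun t => (Real.exp_pos _).le
  calc ‖fourierLaplace (fun t : ℝ => f t) ζ‖
      ≤ C * Real.exp (-b * |ζ.re|) * ∫ t : ℝ, Real.exp (-(c - r) * |t|) :=
        norm_fourierLaplace_le hf hb₀ hba hC (sub_pos.2 hrc)
          (by linarith [abs_im_le_of_mem_closedBall_ofReal hζ])
    _ ≤ C * (Real.exp (b * r) * Real.exp (-n * |x|)) * ∫ t : ℝ, Real.exp (-(c - r) * |t|) := by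
        gcongr
    _ = C * Real.exp (b * r) * (∫ t : ℝ, Real.exp (-(c - r) * |t|)) * Real.exp (-n * |x|) := by
        ring

/-- If f is holomorphic on the strip {|Im z| < a} and decays like e^{−c|x|}
uniformly on every substrip, then every derivative of its Fourier transform on ℝ satisfies
|f̂^{(k)}(x)| ≤ C_n · k! · R^k · e^{−n|x|} for every n < a. -/
theorem stmt4 (f : ℂ → ℂ) (a c : ℝ) (ha : 0 < a) (hc : 0 < c)
    (hf : DifferentiableOn ℂ f {z : ℂ | |z.im| < a})
    (hbound : ∀ b : ℝ, b < a → ∃ C : ℝ, ∀ x y : ℝ, |y| ≤ b →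
      ‖f (x + y * Complex.I)‖ ≤ C * Real.exp (-c * |x|))
    (fhat : ℝ → ℂ)
    (hfhat : ∀ ξ : ℝ, fhat ξ = ∫ t : ℝ, f t * Complex.exp (-Complex.I * t * ξ)) :
    ∀ k : ℕ, ∀ n : ℝ, n < a → ∃ Cn > (0:ℝ), ∃ R > (0:ℝ), ∀ x : ℝ,
      ‖iteratedDeriv k fhat x‖ ≤ Cn * (Nat.factorial k) * R ^ k * Real.exp (-n * |x|) := by
  intro k n hn
  obtain ⟨b, hnb, hba⟩ := exists_between (max_lt hn ha)
  have hb₀ : 0 ≤ b := (le_max_right n 0).trans hnb.le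
  obtain ⟨C, hC⟩ := hbound b hba
  set F := fourierLaplace fun t : ℝ => f t
  have hFdiff : DifferentiableOn ℂ F {ζ | |ζ.im| < c} :=
    differentiableOn_fourierLaplace
      (hf.continuousOn.comp_continuous continuous_ofReal fun t => by
        simpa using ha).aestronglyMeasurable
      fun t => by simpa using hC t 0 (by simpa using hb₀)
  set K := C * Real.exp (b * (c / 2)) * ∫ t : ℝ, Real.exp (-(c - c / 2) * |t|)
  refine ⟨max K 1, lt_max_of_lt_right one_pos, 2 / c, by positivity, fun x => ?_⟩
  rw [show fhat = fun x : ℝ => F x from funext hfhat,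
    iteratedDeriv_comp_ofReal (isOpen_lt (by fun_prop) continuous_const) hFdiff
      (fun x => by simpa using hc) k]
  calc ‖iteratedDeriv k F x‖ ≤ k.factorial * (K * Real.exp (-n * |x|)) / (c / 2) ^ k :=
        norm_iteratedDeriv_le_of_forall_mem_sphere_norm_le k (half_pos hc)
          (hFdiff.diffContOnCl_ball fun ζ hζ => by
            show |ζ.im| < c
            linarith [abs_im_le_of_mem_closedBall_ofReal hζ])
          fun ζ hζ => norm_fourierLaplace_le_of_mem_closedBall hf hb₀ hba
            ((le_max_left n 0).trans hnb.le) hC (half_lt_self hc) (sphere_subset_closedBall hζ)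
    _ = K * k.factorial * (2 / c) ^ k * Real.exp (-n * |x|) := by
      rw [← inv_div c 2, inv_pow]; ring
    _ ≤ max K 1 * k.factorial * (2 / c) ^ k * Real.exp (-n * |x|) := by
      gcongr; exact le_max_left K 1
end
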